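/- arXiv:1605.02224 — 3 statements merged into one kernel-verified Lean document; each statement's English description precedes it below -/
import Mathlib

section
/- Let δ : Fin 7 → ℝ be nonnegative with δ 0 ≥ δ i for every i. Then (√(δ 0) + (1/2) · ∑_{i=1}^{6} √(δ i))² ≥ ∑_{i=0}^{6} δ i. -/
/-!
Since `√δ i ≤ √δ 0`, each `δ i = √δ i * √δ i` is at most `√δ 0 * √δ i`, so the deficiencies
`δ 1, …, δ 6` sum to at most `√δ 0 * t` with `t = ∑ √δ i`. With weight `1/2` this is exactly the
cross term in the expansion of `(√δ 0 + t / 2) ^ 2`, while `(√δ 0) ^ 2` accounts for `δ 0`.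
-/

open Finset Real

theorem Finset.sum_le_sqrt_mul_sum_sqrt {ι : Type*} (s : Finset ι) {f : ι → ℝ} {M : ℝ}
    (hf : ∀ i ∈ s, 0 ≤ f i) (hM : ∀ i ∈ s, f i ≤ M) :
    ∑ i ∈ s, f i ≤ √M * ∑ i ∈ s, √(f i) := by
  rw [mul_sum]
  refine sum_le_sum fun i hi => ?_
  calc f i = √(f i) * √(f i) := (mul_self_sqrt (hf i hi)).symm
    _ ≤ √M * √(f i) := by gcongr; exact hM i hi

theorem sqrt_weighted_sum_sq_ge {δ : Fin 7 → ℝ}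
    (hnn : ∀ i, 0 ≤ δ i) (hmax : ∀ i, δ i ≤ δ 0) :
    (∑ i, δ i) ≤
      (Real.sqrt (δ 0) + (1/2) * ∑ i ∈ Finset.univ \ {0}, Real.sqrt (δ i)) ^ 2 := by
  set t := ∑ i ∈ univ \ {0}, √(δ i)
  have hrest : ∑ i ∈ univ \ {0}, δ i ≤ √(δ 0) * t :=
    sum_le_sqrt_mul_sum_sqrt _ (fun i _ => hnn i) (fun i _ => hmax i)
  calc ∑ i, δ i = δ 0 + ∑ i ∈ univ \ {0}, δ i :=
        sum_eq_add_sum_sdiff_singleton_of_mem (mem_univ 0) δ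
    _ ≤ √(δ 0) ^ 2 + √(δ 0) * t := by rw [sq_sqrt (hnn 0)]; gcongr
    _ ≤ (√(δ 0) + 1 / 2 * t) ^ 2 := by nlinarith [sq_nonneg t]
end

section
/- Let m, z, g, g' be real numbers with m ≥ 0, 0 ≤ g' ≤ g, 2g ≤ z, and z − 2g' ≤ 4m. Then 4·√(m·(z − 2g')) − (g − g') ≥ 4·√(m·(z − 2g)). -/
theorem dominator_core_ineq (m z g g' : ℝ)
    (hm : 0 ≤ m) (hg' : 0 ≤ g') (hgg : g' ≤ g)
    (hzg : 2 * g ≤ z) (hz4m : z - 2 * g' ≤ 4 * m) :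
    4 * Real.sqrt (m * (z - 2 * g')) - (g - g') ≥ 4 * Real.sqrt (m * (z - 2 * g)) := by
  set s := Real.sqrt (m * (z - 2 * g')) with hs
  set t := Real.sqrt (m * (z - 2 * g)) with ht
  have hs0 : 0 ≤ s := Real.sqrt_nonneg _
  have ht0 : 0 ≤ t := Real.sqrt_nonneg _
  have ha : 0 ≤ m * (z - 2 * g') := mul_nonneg hm (by linarith)
  have hb : 0 ≤ m * (z - 2 * g) := mul_nonneg hm (by linarith)
  have hs2 : s ^ 2 = m * (z - 2 * g') := Real.sq_sqrt ha
  have ht2 : t ^ 2 = m * (z - 2 * g) := Real.sq_sqrt hb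
  have hsle : s ≤ 2 * m := by
    nlinarith [Real.sqrt_le_sqrt (show m * (z - 2 * g') ≤ (2*m)^2 by nlinarith),
      Real.sqrt_sq (show (0:ℝ) ≤ 2*m by linarith)]
  have hts : t ≤ s := by
    rw [hs, ht]
    exact Real.sqrt_le_sqrt (by nlinarith)
  rcases eq_or_lt_of_le (add_nonneg hs0 ht0) with h0 | hpos
  · -- s + t = 0, so s = t = 0
    have hse : s = 0 := by linarith
    have hte : t = 0 := by linarith
    have : m * (z - 2 * g') = 0 := by rw [← hs2, hse]; ring
    rcases mul_eq_zero.mp this with hm0 | hz0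
    · have : g ≤ g' := by nlinarith
      rw [hse, hte]; linarith
    · have : g ≤ g' := by linarith
      rw [hse, hte]; linarith
  · have key : 0 ≤ (4 * s - 4 * t - (g - g')) * (s + t) := by
      nlinarith [mul_nonneg (sub_nonneg.2 hgg) (show 0 ≤ 4 * m - (s + t) by linarith)]
    have := (mul_nonneg_iff_of_pos_right hpos).mp key
    linarith
end

section
/- Consider the bipartite graph Enc_A with input vertices {a11, a12, a21, a22} and output vertices {1,…,7}, where the neighborhoods of the outputs are N(1)={a11,a22}, N(2)={a21,a22}, N(3)={a11}, N(4)={a22}, N(5)={a11,a12}, N(6)={a11,a21}, N(7)={a12,a22}. Then for every subset Y of the outputs there exists a matching in this graph saturating a subset of Y of size at least min{|Y|, 1 + ⌈(|Y|−1)/2⌉}; equivalently, there exist a subset X of the inputs with min{|Y|, 1+⌈(|Y|−1)/2⌉} ≤ |X| ≤ |Y| and an injection from X into Y mapping each input to an adjacent output. -/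
set_option maxRecDepth 10000


/-- Neighborhoods of the seven outputs of the encoder `Enc_A` of Strassen's
algorithm. Inputs are indexed `0 = a11`, `1 = a12`, `2 = a21`, `3 = a22`;
output `i : Fin 7` corresponds to the left factor of the subproduct `M_{i+1}`. -/
def encANbrs : Fin 7 → Finset (Fin 4) :=
  ![{0, 3}, {2, 3}, {0}, {3}, {0, 1}, {0, 2}, {1, 3}]

/-- Neighborhoods as lists, for computation. -/
def encANbrsL : Fin 7 → List (Fin 4) :=
  ![[0, 3], [2, 3], [0], [3], [0, 1], [0, 2], [1, 3]]

/-- Greedy matching: process the outputs of `Y` (singleton-neighborhood outputs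
`2`, `3` first), assigning each output an as yet unused neighbor if possible. -/
def encGreedy (Y : Finset (Fin 7)) : List (Fin 4 × Fin 7) :=
  (([2, 3, 0, 1, 4, 5, 6] : List (Fin 7)).filter (· ∈ Y)).foldl (fun acc y =>
    match (encANbrsL y).find? (fun n => acc.all (fun p => p.1 ≠ n)) with
    | some n => (n, y) :: acc
    | none => acc) []

def encX (Y : Finset (Fin 7)) : Finset (Fin 4) := ((encGreedy Y).map Prod.fst).toFinset

def encF (Y : Finset (Fin 7)) : Fin 4 → Fin 7 :=
  fun x => (((encGreedy Y).lookup x).getD 0)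

theorem encOK : ∀ Y : Finset (Fin 7),
    min Y.card (1 + (Y.card - 1 + 1) / 2) ≤ (encX Y).card ∧
    (encX Y).card ≤ Y.card ∧
    (∀ x ∈ encX Y, ∀ y ∈ encX Y, encF Y x = encF Y y → x = y) ∧
    ∀ x ∈ encX Y, encF Y x ∈ Y ∧ x ∈ encANbrs (encF Y x) := by decide

theorem encA_matching (Y : Finset (Fin 7)) :
    ∃ (X : Finset (Fin 4)) (f : Fin 4 → Fin 7),
      min Y.card (1 + (Y.card - 1 + 1) / 2) ≤ X.card ∧
      X.card ≤ Y.card ∧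
      Set.InjOn f X ∧
      ∀ x ∈ X, f x ∈ Y ∧ x ∈ encANbrs (f x) := by
  obtain ⟨h1, h2, h3, h4⟩ := encOK Y
  exact ⟨encX Y, encF Y, h1, h2, fun x hx y hy => h3 x hx y hy, h4⟩
end
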